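/- Let a < b be real numbers, t > 0, and let μ be the Borel measure on ℝ with density t·1_{[a,b]}. Let n be a positive integer and let β = {a₁ < a₂ < ⋯ < a_n < b} be a set of n + 1 points that minimizes the distortion error V(μ; ·) among all (n + 1)-point subsets of ℝ that contain the endpoint b. Then a_j = a + (2j − 1)(b − a₁)/(2n) for 1 ≤ j ≤ n, and the distortion error of β equals V(μ; β) = t(b − a₁)³/(12 n²) + t(a₁ − a)³/3. -/

import Mathlib

open MeasureTheory Set

/-- Distortion error of a set `α` with respect to the measure `Q`. -/
noncomputable def distortion (Q : Measure ℝ) (α : Set ℝ) : ℝ :=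
  ∫ x, sInf ((fun a => (x - a) ^ 2) '' α) ∂Q

/-- The `n`-th quantization error of the measure `Q`. -/
noncomputable def quantErr (Q : Measure ℝ) (n : ℕ) : ℝ :=
  sInf { v : ℝ | ∃ α : Set ℝ, α.Finite ∧ α.Nonempty ∧ α.ncard ≤ n ∧ v = distortion Q α }

/-- `α` is an optimal set of `n`-means for `Q`. -/
def IsOptimal (Q : Measure ℝ) (n : ℕ) (α : Set ℝ) : Prop :=
  α.Finite ∧ 1 ≤ α.ncard ∧ α.ncard ≤ n ∧ distortion Q α = quantErr Q n

/-- The measure on `ℝ` with constant density `t` on `[a, b]` and `0` elsewhere. -/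
noncomputable def unif (a b t : ℝ) : Measure ℝ :=
  volume.withDensity fun x => ENNReal.ofReal ((Icc a b).indicator (fun _ => t) x)

/-! On `[a, b]` the nearest point of a configuration `c₀ ≤ ⋯ ≤ cₙ = b` is found cell by cell: the
half-cell `[a, c₀]` costs `e³ / 3` with `e = c₀ - a` and each gap `dᵢ = cᵢ₊₁ - cᵢ` costs `dᵢ³ / 12`
(the sum is `gapCost a c`), provided `a ≤ c₀`; replacing every point by `max cⱼ a` only lowers
the distortion, so this case suffices. Writing `b - a = (2n + 1) h`, the identity
`e³/3 + ∑ dᵢ³/12 = (2n+1) h³/3 + (e - h)² (e + 2h)/3 + ∑ (dᵢ - 2h)² (dᵢ + 4h)/12`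
shows that the equispaced configuration `a + (2j + 1) h` is the unique minimiser. Since it contains
`b`, the optimal `β` must be this configuration, and `b - a₁ = 2nh` gives both formulas. -/

noncomputable def nearestSqDist {ι : Type*} [Fintype ι] [Nonempty ι] (c : ι → ℝ) (x : ℝ) : ℝ :=
  Finset.univ.inf' Finset.univ_nonempty fun j => (x - c j) ^ 2

lemma strictMono_snoc {α : Type*} [Preorder α] {n : ℕ} {p : Fin n → α} {b : α}
    (hp : StrictMono p) (hb : ∀ j, p j < b) : StrictMono (Fin.snoc p b : Fin (n + 1) → α) := by
  rw [← Fin.insertNth_last']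
  exact (Fin.strictMono_insertNth_iff _ _ _).2
    ⟨hp, fun i _ => hb i, fun i hi => absurd hi (Fin.castSucc_lt_last i).not_ge⟩

lemma integral_sub_sq (u v e : ℝ) :
    ∫ x in u..v, (x - e) ^ 2 = ((v - e) ^ 3 - (u - e) ^ 3) / 3 := by
  rw [intervalIntegral.integral_comp_sub_right (fun x => x ^ 2) e, integral_pow]
  norm_num

lemma unif_eq_smul_restrict (a b t : ℝ) :
    unif a b t = ENNReal.ofReal t • volume.restrict (Icc a b) := by
  have : (fun x => ENNReal.ofReal ((Icc a b).indicator (fun _ => t) x)) =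
      (Icc a b).indicator fun _ => ENNReal.ofReal t := by
    funext x
    by_cases hx : x ∈ Icc a b <;> simp [hx]
  rw [unif, this, withDensity_indicator measurableSet_Icc, withDensity_const]

section NearestSqDist

variable {ι : Type*} [Fintype ι] [Nonempty ι]

lemma nearestSqDist_le (c : ι → ℝ) (x : ℝ) (j : ι) : nearestSqDist c x ≤ (x - c j) ^ 2 :=
  Finset.inf'_le _ (Finset.mem_univ j)

lemma exists_nearestSqDist_eq (c : ι → ℝ) (x : ℝ) : ∃ j, nearestSqDist c x = (x - c j) ^ 2 :=
  let ⟨j, _, hj⟩ := Finset.exists_mem_eq_inf' Finset.univ_nonempty fun j => (x - c j) ^ 2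
  ⟨j, hj⟩

lemma sInf_image_range_eq_nearestSqDist (c : ι → ℝ) (x : ℝ) :
    sInf ((fun a => (x - a) ^ 2) '' range c) = nearestSqDist c x := by
  obtain ⟨j, hj⟩ := exists_nearestSqDist_eq c x
  refine IsLeast.csInf_eq ⟨⟨c j, mem_range_self j, hj.symm⟩, ?_⟩
  rintro _ ⟨_, ⟨i, rfl⟩, rfl⟩
  exact nearestSqDist_le c x i

lemma continuous_nearestSqDist (c : ι → ℝ) : Continuous (nearestSqDist c) :=
  Continuous.finset_inf'_apply _ fun j _ => by fun_prop

lemma nearestSqDist_max_le (c : ι → ℝ) {a x : ℝ} (hx : a ≤ x) :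
    nearestSqDist (fun j => max (c j) a) x ≤ nearestSqDist c x := by
  obtain ⟨j, hj⟩ := exists_nearestSqDist_eq c x
  refine hj ▸ (nearestSqDist_le _ x j).trans ?_
  rcases le_total a (c j) with h | h
  · rw [max_eq_left h]
  · rw [max_eq_right h]
    nlinarith

lemma distortion_unif_range (c : ι → ℝ) {a b t : ℝ} (hab : a ≤ b) (ht : 0 ≤ t) :
    distortion (unif a b t) (range c) = t * ∫ x in a..b, nearestSqDist c x := by
  simp only [distortion, unif_eq_smul_restrict, integral_smul_measure, ENNReal.toReal_ofReal ht,
    smul_eq_mul, sInf_image_range_eq_nearestSqDist, intervalIntegral.integral_of_le hab,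
    integral_Icc_eq_integral_Ioc]

end NearestSqDist

lemma nearestSqDist_fin_one (c : Fin 1 → ℝ) (x : ℝ) : nearestSqDist c x = (x - c 0) ^ 2 := by
  simp [nearestSqDist]

section Configuration

variable {n : ℕ}

lemma Monotone.fin_init {α : Type*} [Preorder α] {c : Fin (n + 1) → α} (hc : Monotone c) :
    Monotone (Fin.init c) :=
  hc.comp Fin.strictMono_castSucc.monotone

lemma nearestSqDist_of_last_le {c : Fin (n + 1) → ℝ} (hc : Monotone c) {x : ℝ}
    (hx : c (Fin.last n) ≤ x) : nearestSqDist c x = (x - c (Fin.last n)) ^ 2 :=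
  le_antisymm (nearestSqDist_le c x _) <| Finset.le_inf' _ _ fun j _ =>
    pow_le_pow_left₀ (sub_nonneg.2 hx) (by linarith [hc (Fin.le_last j)]) 2

lemma nearestSqDist_eq_min_init (c : Fin (n + 2) → ℝ) (x : ℝ) :
    nearestSqDist c x = min ((x - c (Fin.last _)) ^ 2) (nearestSqDist (Fin.init c) x) := by
  refine le_antisymm (le_min (nearestSqDist_le c x _)
    (Finset.le_inf' _ _ fun i _ => nearestSqDist_le c x (Fin.castSucc i)))
    (Finset.le_inf' _ _ fun j _ => ?_)
  cases j using Fin.lastCases with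
  | last => exact min_le_left _ _
  | cast i => exact (min_le_right _ _).trans (nearestSqDist_le (Fin.init c) x i)

lemma nearestSqDist_eq_init_of_le_midpoint {c : Fin (n + 2) → ℝ} (hc : Monotone c) {x : ℝ}
    (hx : x ≤ (c (Fin.last n).castSucc + c (Fin.last (n + 1))) / 2) :
    nearestSqDist c x = nearestSqDist (Fin.init c) x := by
  have := hc (Fin.castSucc_lt_last (Fin.last n)).le
  rw [nearestSqDist_eq_min_init, min_eq_right]
  exact (nearestSqDist_le _ x (Fin.last n)).trans (by simp only [Fin.init]; nlinarith)

lemma nearestSqDist_of_midpoint_le {c : Fin (n + 2) → ℝ} (hc : Monotone c) {x : ℝ}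
    (hx : (c (Fin.last n).castSucc + c (Fin.last (n + 1))) / 2 ≤ x) :
    nearestSqDist c x = (x - c (Fin.last (n + 1))) ^ 2 := by
  have := hc (Fin.castSucc_lt_last (Fin.last n)).le
  rw [nearestSqDist_eq_min_init, nearestSqDist_of_last_le hc.fin_init
    (by simp only [Fin.init]; linarith)]
  exact min_eq_left (by simp only [Fin.init]; nlinarith)

noncomputable def gapCost (a : ℝ) (c : Fin (n + 1) → ℝ) : ℝ :=
  (c 0 - a) ^ 3 / 3 + ∑ i : Fin n, (c i.succ - c i.castSucc) ^ 3 / 12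

lemma integral_nearestSqDist {c : Fin (n + 1) → ℝ} (hc : Monotone c) {a : ℝ} (ha : a ≤ c 0) :
    ∫ x in a..c (Fin.last n), nearestSqDist c x = gapCost a c := by
  induction n with
  | zero =>
    rw [show nearestSqDist c = fun x => (x - c 0) ^ 2 from funext (nearestSqDist_fin_one c),
      Fin.last_zero, integral_sub_sq, gapCost]
    simp only [Finset.univ_eq_empty, Finset.sum_empty, add_zero]
    ring
  | succ n ih =>
    set u := c (Fin.last n).castSucc
    set v := c (Fin.last (n + 1))
    set m := (u + v) / 2 with hm
    have huv : u ≤ v := hc (Fin.castSucc_lt_last (Fin.last n)).le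
    have hum : u ≤ m := by linarith
    have hmv : m ≤ v := by linarith
    have ham : a ≤ m := (ha.trans (hc (Fin.zero_le _))).trans hum
    have hint {k : ℕ} (c' : Fin (k + 1) → ℝ) (x y : ℝ) :
        IntervalIntegrable (nearestSqDist c') volume x y :=
      (continuous_nearestSqDist c').intervalIntegrable x y
    calc ∫ x in a..v, nearestSqDist c x
        = (∫ x in a..u, nearestSqDist (Fin.init c) x) + (∫ x in u..m, (x - u) ^ 2) +
            ∫ x in m..v, (x - v) ^ 2 := by
          rw [← intervalIntegral.integral_add_adjacent_intervals (hint c a m) (hint c m v),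
            intervalIntegral.integral_congr (a := a) (b := m) fun x hx =>
              nearestSqDist_eq_init_of_le_midpoint hc (uIcc_of_le ham ▸ hx : x ∈ Icc a m).2,
            ← intervalIntegral.integral_add_adjacent_intervals (hint _ a u) (hint _ u m),
            intervalIntegral.integral_congr (a := u) (b := m) fun x hx =>
              nearestSqDist_of_last_le hc.fin_init (uIcc_of_le hum ▸ hx : x ∈ Icc u m).1,
            intervalIntegral.integral_congr (a := m) (b := v) fun x hx =>
              nearestSqDist_of_midpoint_le hc (uIcc_of_le hmv ▸ hx : x ∈ Icc m v).1]
          rfl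
      _ = gapCost a c := by
          rw [show u = Fin.init c (Fin.last n) from rfl, ih hc.fin_init ha, integral_sub_sq, integral_sub_sq, gapCost, gapCost,
            Fin.sum_univ_castSucc]
          simp only [Fin.init, Fin.castSucc_zero, Fin.succ_last, Fin.succ_castSucc, u, v, m]
          ring

lemma sum_succ_sub_castSucc (c : Fin (n + 1) → ℝ) :
    ∑ i : Fin n, (c i.succ - c i.castSucc) = c (Fin.last n) - c 0 := by
  induction n with
  | zero => simp
  | succ n ih =>
    rw [Fin.sum_univ_castSucc]
    simp only [Fin.succ_castSucc]
    rw [show ∑ i : Fin n, (c i.succ.castSucc - c i.castSucc.castSucc) = _ from ih (Fin.init c)]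
    simp [Fin.init]

lemma eq_add_mul_of_succ_sub_eq {c : Fin (n + 1) → ℝ} {d : ℝ}
    (hd : ∀ i : Fin n, c i.succ - c i.castSucc = d) (j : Fin (n + 1)) :
    c j = c 0 + (j : ℕ) * d := by
  induction j using Fin.induction with
  | zero => simp
  | succ i ih =>
    simp only [Fin.val_succ, Fin.val_castSucc, Nat.cast_succ] at ih ⊢
    linear_combination hd i + ih

lemma gapCost_eq_add {a h : ℝ} {c : Fin (n + 1) → ℝ}
    (hh : c (Fin.last n) = a + (2 * n + 1) * h) :
    gapCost a c = (2 * n + 1) * h ^ 3 / 3 + ((c 0 - a - h) ^ 2 * (c 0 - a + 2 * h) / 3 +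
      ∑ i : Fin n, (c i.succ - c i.castSucc - 2 * h) ^ 2 * (c i.succ - c i.castSucc + 4 * h) / 12) := by
  have hterm : ∀ i : Fin n, (c i.succ - c i.castSucc) ^ 3 / 12 =
      (c i.succ - c i.castSucc - 2 * h) ^ 2 * (c i.succ - c i.castSucc + 4 * h) / 12 +
        (h ^ 2 * (c i.succ - c i.castSucc) - 4 * h ^ 3 / 3) := fun i => by ring
  rw [gapCost, Finset.sum_congr rfl fun i _ => hterm i, Finset.sum_add_distrib,
    Finset.sum_sub_distrib, ← Finset.mul_sum, sum_succ_sub_castSucc, hh, Finset.sum_const,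
    Finset.card_univ, Fintype.card_fin, nsmul_eq_mul]
  ring

lemma le_gapCost {a h : ℝ} {c : Fin (n + 1) → ℝ} (hc : Monotone c) (ha : a ≤ c 0)
    (hh : c (Fin.last n) = a + (2 * n + 1) * h) : (2 * n + 1) * h ^ 3 / 3 ≤ gapCost a c := by
  have hh0 : 0 ≤ h := by
    have := hc (Fin.zero_le (Fin.last n))
    nlinarith
  rw [gapCost_eq_add hh]
  refine le_add_of_nonneg_right (add_nonneg ?_ (Finset.sum_nonneg fun i _ => ?_))
  · have : 0 ≤ c 0 - a + 2 * h := by linarith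
    positivity
  · have : 0 ≤ c i.succ - c i.castSucc + 4 * h := by
      linarith [hc (Fin.castSucc_le_succ i)]
    positivity

lemma eq_of_gapCost_le {a h : ℝ} {c : Fin (n + 1) → ℝ} (hc : Monotone c) (ha : a ≤ c 0)
    (hh : c (Fin.last n) = a + (2 * n + 1) * h) (hpos : 0 < h)
    (hle : gapCost a c ≤ (2 * n + 1) * h ^ 3 / 3) (j : Fin (n + 1)) :
    c j = a + (2 * (j : ℕ) + 1) * h := by
  have hfirst : 0 < c 0 - a + 2 * h := by linarith
  have hgap (i : Fin n) : 0 < c i.succ - c i.castSucc + 4 * h := by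
    linarith [hc (Fin.castSucc_le_succ i)]
  have hterms : ∀ i ∈ (Finset.univ : Finset (Fin n)),
      0 ≤ (c i.succ - c i.castSucc - 2 * h) ^ 2 * (c i.succ - c i.castSucc + 4 * h) / 12 :=
    fun i _ => by have := hgap i; positivity
  have hfirst_nonneg : 0 ≤ (c 0 - a - h) ^ 2 * (c 0 - a + 2 * h) / 3 := by positivity
  rw [gapCost_eq_add hh] at hle
  have hsum_nonneg := Finset.sum_nonneg hterms
  have hfirst_zero : (c 0 - a - h) ^ 2 * (c 0 - a + 2 * h) / 3 = 0 := by linarith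
  have hterms_zero := (Finset.sum_eq_zero_iff_of_nonneg hterms).1 (by linarith)
  have h0 : c 0 = a + h := by
    simp only [div_eq_zero_iff, mul_eq_zero, hfirst.ne', pow_eq_zero_iff, ne_eq,
      OfNat.ofNat_ne_zero, not_false_eq_true, or_false] at hfirst_zero
    linarith
  have hd (i : Fin n) : c i.succ - c i.castSucc = 2 * h := by
    have := hterms_zero i (Finset.mem_univ i)
    simp only [div_eq_zero_iff, mul_eq_zero, (hgap i).ne', pow_eq_zero_iff, ne_eq,
      OfNat.ofNat_ne_zero, not_false_eq_true, or_false] at this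
    linarith
  rw [eq_add_mul_of_succ_sub_eq hd j, h0]
  ring

variable {a b h : ℝ} {c : Fin (n + 1) → ℝ}

lemma gapCost_max_le_integral (hc : Monotone c) (hb : c (Fin.last n) = b) (hab : a ≤ b) :
    gapCost a (fun j => max (c j) a) ≤ ∫ x in a..b, nearestSqDist c x := by
  have hc' : Monotone fun j => max (c j) a := fun i j hij => max_le_max (hc hij) le_rfl
  calc gapCost a (fun j => max (c j) a)
      = ∫ x in a..b, nearestSqDist (fun j => max (c j) a) x := by
        rw [← integral_nearestSqDist hc' (le_max_right _ _), hb, max_eq_left hab]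
    _ ≤ ∫ x in a..b, nearestSqDist c x :=
        intervalIntegral.integral_mono_on hab
          ((continuous_nearestSqDist _).intervalIntegrable _ _)
          ((continuous_nearestSqDist _).intervalIntegrable _ _)
          fun x hx => nearestSqDist_max_le c hx.1

lemma le_integral_nearestSqDist (hc : Monotone c) (hb : c (Fin.last n) = b)
    (hh : b = a + (2 * n + 1) * h) (hab : a ≤ b) :
    (2 * n + 1) * h ^ 3 / 3 ≤ ∫ x in a..b, nearestSqDist c x :=
  (le_gapCost (fun i j hij => max_le_max (hc hij) le_rfl) (le_max_right _ _)
    (by rw [hb, max_eq_left hab, hh])).trans (gapCost_max_le_integral hc hb hab)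

lemma eq_of_integral_nearestSqDist_le (hc : Monotone c) (hb : c (Fin.last n) = b)
    (hh : b = a + (2 * n + 1) * h) (hpos : 0 < h)
    (hle : ∫ x in a..b, nearestSqDist c x ≤ (2 * n + 1) * h ^ 3 / 3) (j : Fin (n + 1)) :
    c j = a + (2 * (j : ℕ) + 1) * h := by
  have hab : a ≤ b := by rw [hh]; nlinarith
  have hmax := eq_of_gapCost_le (fun i j hij => max_le_max (hc hij) le_rfl) (le_max_right _ _)
    (by rw [hb, max_eq_left hab, hh]) hpos ((gapCost_max_le_integral hc hb hab).trans hle) j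
  have hlt : a < max (c j) a := by rw [hmax]; nlinarith
  rwa [max_eq_left ((lt_max_iff.1 hlt).resolve_right (lt_irrefl a)).le] at hmax

lemma strictMono_equispaced (a : ℝ) (hpos : 0 < h) :
    StrictMono fun j : Fin (n + 1) => a + (2 * (j : ℕ) + 1) * h := fun i j hij => by
  have : ((i : ℕ) : ℝ) < (j : ℕ) := by exact_mod_cast hij
  dsimp only
  gcongr

lemma integral_nearestSqDist_equispaced (hh : b = a + (2 * n + 1) * h) (hpos : 0 < h) :
    ∫ x in a..b, nearestSqDist (fun j : Fin (n + 1) => a + (2 * (j : ℕ) + 1) * h) x =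
      (2 * n + 1) * h ^ 3 / 3 := by
  have hb : a + (2 * ((Fin.last n : ℕ) : ℝ) + 1) * h = b := by simp [hh]
  rw [← hb, integral_nearestSqDist (strictMono_equispaced a hpos).monotone (by simp [hpos.le]),
    gapCost]
  simp only [Fin.val_succ, Fin.val_castSucc, Fin.val_zero, Nat.cast_succ, Nat.cast_zero]
  simp only [show ∀ x : ℝ, (a + (2 * (x + 1) + 1) * h - (a + (2 * x + 1) * h)) ^ 3 / 12
    = 2 * h ^ 3 / 3 from fun x => by ring, Finset.sum_const, Finset.card_univ, Fintype.card_fin,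
    nsmul_eq_mul]
  ring

end Configuration

theorem stmt_3 (a b t : ℝ) (hab : a < b) (ht : 0 < t) (n : ℕ) (hn : 0 < n)
    (p : Fin n → ℝ) (hmono : StrictMono p) (hlt : ∀ j, p j < b)
    (hmin : ∀ γ : Set ℝ, γ.Finite → γ.ncard = n + 1 → b ∈ γ →
      distortion (unif a b t) (Set.range p ∪ {b}) ≤ distortion (unif a b t) γ) :
    (∀ j : Fin n, p j = a + (2 * ((j : ℕ) : ℝ) + 1) * (b - p ⟨0, hn⟩) / (2 * n)) ∧
    distortion (unif a b t) (Set.range p ∪ {b}) =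
      t * (b - p ⟨0, hn⟩) ^ 3 / (12 * n ^ 2) + t * (p ⟨0, hn⟩ - a) ^ 3 / 3 := by
  set h := (b - a) / (2 * n + 1)
  have hh : b = a + (2 * n + 1) * h := by rw [mul_div_cancel₀ _ (by positivity)]; ring
  have hpos : 0 < h := div_pos (sub_pos.2 hab) (by positivity)
  set c : Fin (n + 1) → ℝ := Fin.snoc p b
  have hc : Monotone c := (strictMono_snoc hmono hlt).monotone
  have hβ : range p ∪ {b} = range c := by rw [Fin.range_snoc, union_singleton]
  have hI : ∫ x in a..b, nearestSqDist c x ≤ (2 * n + 1) * h ^ 3 / 3 := by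
    have hq := strictMono_equispaced (n := n) a hpos
    have := hmin _ (finite_range _) (by rw [ncard_range_of_injective hq.injective, Nat.card_fin])
      ⟨Fin.last n, by simp [hh]⟩
    rwa [hβ, distortion_unif_range _ hab.le ht.le, distortion_unif_range _ hab.le ht.le,
      integral_nearestSqDist_equispaced hh hpos, mul_le_mul_iff_right₀ ht] at this
  have hp (j : Fin n) : p j = a + (2 * (j : ℕ) + 1) * h := by
    simpa [c] using eq_of_integral_nearestSqDist_le hc (Fin.snoc_last _ _) hh hpos hI j.castSucc
  have hp0 : b - p ⟨0, hn⟩ = 2 * n * h := by rw [hp, hh, Fin.val_mk, Nat.cast_zero]; ring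
  refine ⟨fun j => ?_, ?_⟩
  · rw [hp0, hp]
    field_simp
  · rw [hβ, distortion_unif_range _ hab.le ht.le,
      le_antisymm hI (le_integral_nearestSqDist hc (Fin.snoc_last _ _) hh hab.le), hp0, hp]
    field_simp
    ring
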